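/- Let B be a monad on C with Eilenberg–Moore adjunction F ⊣ U, unit η, counit ε̃, and induced comonad B̃ = FU on C^B with comultiplication Δ̃ = FηU and counit ε̃. For an endofunctor Σ on C^B, the adjunction bijection between natural transformations σ : B̃Σ ⟶ ΣB̃ and natural transformations ∇ : UΣ ⟶ UΣB̃ identifies distributive laws σ : B̃ ⟶ Σ (between the comonad B̃ and Σ) exactly with those ∇ satisfying ∇B̃ ∘ ∇ = UΣΔ̃ ∘ ∇ and UΣε̃ ∘ ∇ = id. -/

import Mathlib

open CategoryTheory

universe v u

namespace BohmStefan

variable {C : Type u} [Category.{v} C]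

/-- A distributive law `σ : B̃Σ ⟶ ΣB̃` between a comonad `B̃` and an endofunctor `S`. -/
def IsComonadEndoLaw {A : Type*} [Category A] (Tm : Comonad A) (S : A ⥤ A)
    (σ : S ⋙ (Tm : A ⥤ A) ⟶ (Tm : A ⥤ A) ⋙ S) : Prop :=
  (∀ X, σ.app X ≫ S.map (Tm.δ.app X) =
      Tm.δ.app (S.obj X) ≫ (Tm : A ⥤ A).map (σ.app X) ≫ σ.app (Tm.obj X)) ∧
  (∀ X, σ.app X ≫ S.map (Tm.ε.app X) = Tm.ε.app (S.obj X))

variable (B : Monad C)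

/-- The comonad `B̃ = FU` on the Eilenberg–Moore category induced by the free–forgetful
adjunction `F ⊣ U` of the monad `B`. -/
noncomputable abbrev tildeB : Comonad B.Algebra := B.adj.toComonad

/-- The natural transformation `∇ : UΣ ⟶ UΣB̃` corresponding to `σ : B̃Σ ⟶ ΣB̃` under
the adjunction bijection `Hom(B̃Σ(X,α), ΣB̃(X,α)) ≅ Hom(UΣ(X,α), UΣB̃(X,α))`,
i.e. `∇_a = η_{UΣa} ≫ U(σ_a)`. -/
noncomputable def nabla (S : B.Algebra ⥤ B.Algebra)
    (σ : S ⋙ (tildeB B : B.Algebra ⥤ B.Algebra) ⟶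
      (tildeB B : B.Algebra ⥤ B.Algebra) ⋙ S) (a : B.Algebra) :
    B.forget.obj (S.obj a) ⟶ B.forget.obj (S.obj ((tildeB B).obj a)) :=
  B.adj.unit.app (B.forget.obj (S.obj a)) ≫ B.forget.map (σ.app a)

/-!
Only the adjunction `F ⊣ U` matters, so we work with the comonad `F U` of an arbitrary
adjunction. Both laws are equations between morphisms out of `F (U (S a))`, so each holds iff
its transpose under `F ⊣ U` does. Naturality of the
transposition sends `σ_a ≫ S f` to `∇_a ≫ U S f` and the counit to the identity, and since
`δ_Y ≫ F U f = F (transpose of f)`, it sends `δ ≫ B̃σ ≫ σB̃` to `∇ ≫ ∇B̃`.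
-/

section Transpose

variable {C' D : Type*} [Category C'] [Category D] {F : C' ⥤ D} {U : D ⥤ C'} (adj : F ⊣ U)

lemma _root_.CategoryTheory.Adjunction.homEquiv_counit_app (Y : D) :
    adj.homEquiv _ _ (adj.counit.app Y) = 𝟙 (U.obj Y) := by
  simp [Adjunction.homEquiv_unit]

lemma homEquiv_toComonad_δ_comp_map_comp {Y Y' Z : D}
    (f : F.obj (U.obj Y) ⟶ Y') (g : F.obj (U.obj Y') ⟶ Z) :
    adj.homEquiv _ _ (adj.toComonad.δ.app Y ≫ (adj.toComonad : D ⥤ D).map f ≫ g) =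
      adj.homEquiv _ _ f ≫ adj.homEquiv _ _ g := by
  have hδ : adj.toComonad.δ.app Y ≫ (adj.toComonad : D ⥤ D).map f =
      F.map (adj.homEquiv _ _ f) := by
    rw [Adjunction.homEquiv_unit, F.map_comp]
    rfl
  exact (congrArg (adj.homEquiv _ _) ((reassoc_of% hδ) g)).trans
    (adj.homEquiv_naturality_left _ _)

theorem isComonadEndoLaw_toComonad_iff (S : D ⥤ D)
    (σ : S ⋙ (adj.toComonad : D ⥤ D) ⟶ (adj.toComonad : D ⥤ D) ⋙ S) :
    IsComonadEndoLaw adj.toComonad S σ ↔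
      ((∀ a, adj.homEquiv _ _ (σ.app a) ≫ adj.homEquiv _ _ (σ.app (adj.toComonad.obj a)) =
          adj.homEquiv _ _ (σ.app a) ≫ U.map (S.map (adj.toComonad.δ.app a))) ∧
        ∀ a, adj.homEquiv _ _ (σ.app a) ≫ U.map (S.map (adj.toComonad.ε.app a)) = 𝟙 _) := by
  refine and_congr (forall_congr' fun a => ?_) (forall_congr' fun a => ?_)
  · have hΔ := homEquiv_toComonad_δ_comp_map_comp adj (σ.app a) (σ.app (adj.toComonad.obj a))
    have hσδ := adj.homEquiv_naturality_right (σ.app a) (S.map (adj.toComonad.δ.app a))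
    rw [← hΔ, ← hσδ, eq_comm]
    exact (Equiv.apply_eq_iff_eq _).symm
  · have hσε := adj.homEquiv_naturality_right (σ.app a) (S.map (adj.toComonad.ε.app a))
    rw [← hσε, ← adj.homEquiv_counit_app]
    exact (Equiv.apply_eq_iff_eq _).symm

end Transpose

/-- under the adjunction bijection between natural transformations
`σ : B̃Σ ⟶ ΣB̃` and `∇ : UΣ ⟶ UΣB̃`, the distributive laws `σ` between the comonad
`B̃` and `Σ` correspond exactly to those `∇` satisfying `∇B̃ ∘ ∇ = UΣΔ̃ ∘ ∇` and
`UΣε̃ ∘ ∇ = id`. -/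
theorem distLaw_iff_flat (S : B.Algebra ⥤ B.Algebra)
    (σ : S ⋙ (tildeB B : B.Algebra ⥤ B.Algebra) ⟶
      (tildeB B : B.Algebra ⥤ B.Algebra) ⋙ S) :
    IsComonadEndoLaw (tildeB B) S σ ↔
    ((∀ a : B.Algebra,
        nabla B S σ a ≫ nabla B S σ ((tildeB B).obj a) =
          nabla B S σ a ≫ B.forget.map (S.map ((tildeB B).δ.app a))) ∧
      (∀ a : B.Algebra,
        nabla B S σ a ≫ B.forget.map (S.map ((tildeB B).ε.app a)) =
          𝟙 (B.forget.obj (S.obj a)))) :=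
  isComonadEndoLaw_toComonad_iff B.adj S σ

end BohmStefan
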